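/- Equilibrium identity for hard spheres: for every bounded measurable function ψ : ℝ³ → ℝ, the integral ∫_{ℝ³×ℝ³×S²} |q·n| · M(v) · M₁(w) · (ψ(v⋆) − ψ(v)) dn dw dv equals 0 (the integrand is integrable since M·M₁ has finite first moments). In other words, the Maxwellian M with temperature Θ# is an equilibrium of the linear inelastic Boltzmann operator with hard-spheres kernel, in weak form. -/

import Mathlib

open MeasureTheory Metric Real
open scoped RealInnerProductSpace ENNReal

noncomputable section

/-- `ℝ³` as a Euclidean space. -/
abbrev E3 := EuclideanSpace ℝ (Fin 3)

/-- The unit sphere `S² ⊂ ℝ³`. -/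
abbrev Sph := Metric.sphere (0 : E3) 1

/-- The surface measure on the unit sphere `S² ⊂ ℝ³`. -/
noncomputable def sphMeasure : Measure Sph := (volume : Measure E3).toSphere

/-- The product measure on `ℝ³ × ℝ³ × S²` (velocities `v`, `w` and impact direction `n`). -/
noncomputable def colProd : Measure (E3 × E3 × Sph) :=
  (volume : Measure E3).prod ((volume : Measure E3).prod sphMeasure)

/-- The Maxwellian with mass `m`, temperature `Θ` and bulk velocity `u`:
`(m/(2πΘ))^(3/2) exp(-m|v-u|²/(2Θ))`. -/
noncomputable def maxwellian (m Θ : ℝ) (u v : E3) : ℝ :=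
  (m / (2 * π * Θ)) ^ ((3 : ℝ) / 2) * Real.exp (- m * ‖v - u‖ ^ 2 / (2 * Θ))

/-- The post-collisional velocity `v⋆ = v - 2κ (q·n) n`, with `q = v - w`. -/
noncomputable def vstar (κ : ℝ) (v w : E3) (n : Sph) : E3 :=
  v - (2 * κ * ⟪v - w, (n : E3)⟫) • (n : E3)

/-- The hard-spheres collision kernel `|q·n|`, `q = v - w`. -/
noncomputable def khs (v w : E3) (n : Sph) : ℝ := |⟪v - w, (n : E3)⟫|

/-- The Maxwell-molecules collision kernel `|q̃·n|`, `q̃ = q/|q|`, `q = v - w`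
(arbitrary, i.e. `0`, when `q = 0`). -/
noncomputable def kmax (v w : E3) (n : Sph) : ℝ := |⟪‖v - w‖⁻¹ • (v - w), (n : E3)⟫|

/-!
For a unit vector `n`, the collision map `(v, w) ↦ (v - 2κ(q·n)n, w + 2(1-κ)(q·n)n)` is a linear
involution of `ℝ³ × ℝ³`, so it preserves Lebesgue measure; it reverses `q·n`, so it preserves
`|q·n|` and swaps `v` with `v⋆`. The value of `Θ#` is exactly the balance
`m κ / Θ# = m₁ (1 - κ) / Θ₁`, which makes `m|v - u₁|²/Θ# + m₁|w - u₁|²/Θ₁`, hence `M(v) M₁(w)`,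
collision invariant. So the integrand is odd under a measure-preserving involution and integrates
to zero.
-/

open Function

/- No integrability is needed: a measure-preserving change of variables by a measurable
equivalence is valid for the Bochner integral of any function. -/
theorem integral_eq_zero_of_involutive_of_comp_eq_neg {α E : Type*} [MeasurableSpace α]
    [NormedAddCommGroup E] [NormedSpace ℝ E] {μ : Measure α} {T : α → α} (hT : Involutive T)
    (hTμ : MeasurePreserving T μ μ) {F : α → E} (hF : ∀ x, F (T x) = -F x) :
    ∫ x, F x ∂μ = 0 := by
  have := IsAddTorsionFree.of_isTorsionFree ℝ E
  have h := hTμ.integral_comp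
    (MeasurableEquiv.ofInvolutive T hT hTμ.measurable).measurableEmbedding F
  simp only [hF, integral_neg] at h
  exact neg_eq_self.mp h

theorem LinearMap.map_addHaar_eq_self_of_involutive {E : Type*} [NormedAddCommGroup E]
    [NormedSpace ℝ E] [MeasurableSpace E] [BorelSpace E] [FiniteDimensional ℝ E]
    (μ : Measure E) [μ.IsAddHaarMeasure] {f : E →ₗ[ℝ] E} (hf : Involutive f) :
    Measure.map f μ = μ := by
  have hdet : LinearMap.det f * LinearMap.det f = 1 := by
    rw [← LinearMap.det_comp, show f ∘ₗ f = LinearMap.id from LinearMap.ext hf, LinearMap.det_id]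
  have habs : |LinearMap.det f| = 1 := by
    rcases mul_self_eq_one_iff.1 hdet with h | h <;> simp [h]
  rw [Measure.map_linearMap_addHaar_eq_smul_addHaar μ (left_ne_zero_of_mul_eq_one hdet),
    abs_inv, habs]
  simp

section Collision

variable {V : Type*} [NormedAddCommGroup V] [InnerProductSpace ℝ V]

def collisionMap (κ : ℝ) (n : V) : V × V →L[ℝ] V × V :=
  let q := (innerSL ℝ n).comp (ContinuousLinearMap.fst ℝ V V - ContinuousLinearMap.snd ℝ V V)
  (ContinuousLinearMap.fst ℝ V V - q.smulRight ((2 * κ) • n)).prod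
    (ContinuousLinearMap.snd ℝ V V + q.smulRight ((2 * (1 - κ)) • n))

@[simp]
theorem collisionMap_apply (κ : ℝ) (n : V) (p : V × V) :
    collisionMap κ n p =
      (p.1 - (2 * κ * ⟪p.1 - p.2, n⟫) • n, p.2 + (2 * (1 - κ) * ⟪p.1 - p.2, n⟫) • n) := by
  simp [collisionMap, smul_smul, mul_comm, real_inner_comm, inner_sub_left]

theorem inner_collisionMap_sub {n : V} (hn : ‖n‖ = 1) (κ : ℝ) (p : V × V) :
    ⟪(collisionMap κ n p).1 - (collisionMap κ n p).2, n⟫ = -⟪p.1 - p.2, n⟫ := by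
  simp only [collisionMap_apply, inner_sub_left, inner_add_left, real_inner_smul_left,
    real_inner_self_eq_norm_sq, hn]
  ring

theorem collisionMap_involutive {n : V} (hn : ‖n‖ = 1) (κ : ℝ) :
    Involutive (collisionMap κ n) := by
  intro p
  have h := inner_collisionMap_sub hn κ p
  rw [collisionMap_apply (p := collisionMap κ n p), h]
  simp only [collisionMap_apply]
  ext <;> module

theorem map_collisionMap_addHaar [FiniteDimensional ℝ V] [MeasurableSpace V] [BorelSpace V]
    (μ : Measure (V × V)) [μ.IsAddHaarMeasure] {n : V} (hn : ‖n‖ = 1) (κ : ℝ) :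
    Measure.map (collisionMap κ n) μ = μ :=
  LinearMap.map_addHaar_eq_self_of_involutive μ (collisionMap_involutive hn κ)

def collision (κ : ℝ) (p : V × V × sphere (0 : V) 1) : V × V × sphere (0 : V) 1 :=
  ((collisionMap κ (p.2.2 : V) (p.1, p.2.1)).1, (collisionMap κ (p.2.2 : V) (p.1, p.2.1)).2, p.2.2)

theorem collision_involutive (κ : ℝ) : Involutive (collision (V := V) κ) := by
  rintro ⟨v, w, n⟩
  simp only [collision, collisionMap_involutive (norm_eq_of_mem_sphere n) κ (v, w)]

theorem measurePreserving_collision [FiniteDimensional ℝ V] [MeasurableSpace V] [BorelSpace V]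
    (μ : Measure V) [μ.IsAddHaarMeasure] (σ : Measure (sphere (0 : V) 1)) [SFinite σ] (κ : ℝ) :
    MeasurePreserving (collision κ) (μ.prod (μ.prod σ)) (μ.prod (μ.prod σ)) := by
  let e : V × V × sphere (0 : V) 1 ≃ᵐ sphere (0 : V) 1 × (V × V) :=
    MeasurableEquiv.prodAssoc.symm.trans MeasurableEquiv.prodComm
  have he : MeasurePreserving e (μ.prod (μ.prod σ)) (σ.prod (μ.prod μ)) :=
    (measurePreserving_prodAssoc μ μ σ).symm.trans (Measure.measurePreserving_swap)
  have hskew : MeasurePreserving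
      (fun q : sphere (0 : V) 1 × (V × V) => (q.1, collisionMap κ (q.1 : V) q.2))
      (σ.prod (μ.prod μ)) (σ.prod (μ.prod μ)) :=
    (MeasurePreserving.id σ).skew_product
      (by simp only [uncurry_def, collisionMap_apply]; fun_prop)
      (ae_of_all _ fun n => map_collisionMap_addHaar _ (norm_eq_of_mem_sphere n) κ)
  exact (he.symm e).comp (hskew.comp he)

theorem weighted_energy_collisionMap {a b κ : ℝ} (hab : a * κ = b * (1 - κ)) {n : V}
    (hn : ‖n‖ = 1) (u : V) (p : V × V) :
    a * ‖(collisionMap κ n p).1 - u‖ ^ 2 + b * ‖(collisionMap κ n p).2 - u‖ ^ 2 =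
      a * ‖p.1 - u‖ ^ 2 + b * ‖p.2 - u‖ ^ 2 := by
  have hz : ⟪p.1 - p.2, n⟫ = ⟪p.1 - u, n⟫ - ⟪p.2 - u, n⟫ := by
    rw [← inner_sub_left, sub_sub_sub_cancel_right]
  rw [collisionMap_apply, sub_right_comm, add_sub_right_comm, norm_sub_sq_real, norm_add_sq_real,
    norm_smul, norm_smul, hn, real_inner_smul_right, real_inner_smul_right, hz]
  simp only [Real.norm_eq_abs, mul_one, sq_abs]
  set x := ⟪p.1 - u, n⟫
  set y := ⟪p.2 - u, n⟫
  linear_combination 4 * (x - y) * (κ * (x - y) - x) * hab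

end Collision

theorem maxwellian_mul_maxwellian_collisionMap {m m1 Θ Θ1 κ : ℝ}
    (hbal : m / Θ * κ = m1 / Θ1 * (1 - κ)) (u : E3) {n : E3} (hn : ‖n‖ = 1) (p : E3 × E3) :
    maxwellian m Θ u (collisionMap κ n p).1 * maxwellian m1 Θ1 u (collisionMap κ n p).2 =
      maxwellian m Θ u p.1 * maxwellian m1 Θ1 u p.2 := by
  have hexp : ∀ x y : E3, maxwellian m Θ u x * maxwellian m1 Θ1 u y =
      (m / (2 * π * Θ)) ^ ((3 : ℝ) / 2) * (m1 / (2 * π * Θ1)) ^ ((3 : ℝ) / 2) *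
        Real.exp (-(m / Θ * ‖x - u‖ ^ 2 + m1 / Θ1 * ‖y - u‖ ^ 2) / 2) := by
    intro x y
    rw [maxwellian, maxwellian, mul_mul_mul_comm, ← Real.exp_add]
    ring_nf
  rw [hexp, hexp, weighted_energy_collisionMap hbal hn]

theorem mass_div_temperature_balance {m m1 β Θ1 α κ Θs : ℝ} (hmm1 : m + m1 ≠ 0) (hm : m ≠ 0)
    (hβ : β ≠ 1) (hΘ1 : Θ1 ≠ 0)
    (hα : α = m1 / (m + m1)) (hκ : κ = α * (1 - β))
    (hΘs : Θs = (1 - α) * (1 - β) * Θ1 / (1 - α * (1 - β))) :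
    m / Θs * κ = m1 / Θ1 * (1 - κ) := by
  have h1α : 1 - α = m / (m + m1) := by rw [hα]; field_simp; ring
  have h1β : 1 - β ≠ 0 := sub_ne_zero.mpr hβ.symm
  rw [hΘs, ← hκ, h1α, hκ, hα]
  field_simp

theorem vstar_eq_collisionMap_fst (κ : ℝ) (v w : E3) (n : Sph) :
    vstar κ v w n = (collisionMap κ (n : E3) (v, w)).1 := by
  simp [vstar]

theorem khs_collisionMap (κ : ℝ) (v w : E3) (n : Sph) :
    khs (collisionMap κ (n : E3) (v, w)).1 (collisionMap κ (n : E3) (v, w)).2 n = khs v w n := by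
  rw [khs, khs, inner_collisionMap_sub (norm_eq_of_mem_sphere n), abs_neg]

theorem maxwellian_equilibrium_hard_spheres_general
    (m m1 e Θ1 : ℝ) (u1 : E3)
    (hm : 0 < m) (hm1 : 0 < m1) (he : e ∈ Set.Ioo (0 : ℝ) 1) (hΘ1 : 0 < Θ1)
    (α β κ Θs : ℝ)
    (hα : α = m1 / (m + m1)) (hβ : β = (1 - e) / 2) (hκ : κ = α * (1 - β))
    (hΘs : Θs = (1 - α) * (1 - β) * Θ1 / (1 - α * (1 - β)))
    (ψ : E3 → ℝ) :
    ∫ p : E3 × E3 × Sph,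
        khs p.1 p.2.1 p.2.2 * maxwellian m Θs u1 p.1 * maxwellian m1 Θ1 u1 p.2.1 *
          (ψ (vstar κ p.1 p.2.1 p.2.2) - ψ p.1) ∂colProd = 0 := by
  have hbal : m / Θs * κ = m1 / Θ1 * (1 - κ) :=
    mass_div_temperature_balance (by positivity) hm.ne' (by rw [hβ]; linarith [he.1]) hΘ1.ne'
      hα hκ hΘs
  unfold colProd sphMeasure
  refine integral_eq_zero_of_involutive_of_comp_eq_neg (collision_involutive κ)
    (measurePreserving_collision volume _ κ) ?_
  rintro ⟨v, w, n⟩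
  have hn : ‖(n : E3)‖ = 1 := norm_eq_of_mem_sphere n
  simp only [collision, vstar_eq_collisionMap_fst, Prod.mk.eta, collisionMap_involutive hn κ (v, w),
    khs_collisionMap]
  rw [mul_assoc (khs v w n), maxwellian_mul_maxwellian_collisionMap hbal u1 hn (v, w)]
  ring

/-- The Maxwellian `M` with temperature `Θ#` is an equilibrium of the linear
inelastic Boltzmann operator with hard-spheres kernel, in weak form. -/
theorem maxwellian_equilibrium_hard_spheres
    (m m1 e Θ1 : ℝ) (u1 : E3)
    (hm : 0 < m) (hm1 : 0 < m1) (he : e ∈ Set.Ioo (0 : ℝ) 1) (hΘ1 : 0 < Θ1)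
    (α β κ Θs : ℝ)
    (hα : α = m1 / (m + m1)) (hβ : β = (1 - e) / 2) (hκ : κ = α * (1 - β))
    (hΘs : Θs = (1 - α) * (1 - β) * Θ1 / (1 - α * (1 - β)))
    (ψ : E3 → ℝ) (hψ : Measurable ψ) (hψb : ∃ C : ℝ, ∀ v : E3, |ψ v| ≤ C) :
    ∫ p : E3 × E3 × Sph,
        khs p.1 p.2.1 p.2.2 * maxwellian m Θs u1 p.1 * maxwellian m1 Θ1 u1 p.2.1 *
          (ψ (vstar κ p.1 p.2.1 p.2.2) - ψ p.1) ∂colProd = 0 :=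
  maxwellian_equilibrium_hard_spheres_general m m1 e Θ1 u1 hm hm1 he hΘ1 α β κ Θs hα hβ hκ hΘs ψ
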